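/- arXiv:2405.17091 — 8 statements merged into one kernel-verified Lean document; each statement's English description precedes it below -/
import Mathlib

section
/- Let (v_1,…,v_N,d) be a weight system and let R ⊆ (ℤ_{≥0}^N)_d be any subset. Then R satisfies condition (C1) if and only if R satisfies condition (C2). -/
open MvPolynomial

/-- The `k`-th standard basis vector `e_k` of `ℤ_{≥0}^N`. -/
def stdBasisVec {N : ℕ} (k : Fin N) : Fin N → ℕ := fun i => if i = k then 1 else 0

/-- The slice `(ℤ_{≥0}^N)_k` of the lattice, with respect to the weights `v`. -/
def latAt {N : ℕ} (v : Fin N → ℕ) (k : ℕ) : Set (Fin N → ℕ) := {α | ∑ i, α i * v i = k}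

/-- `ℤ_{≥0}^J`, the lattice points supported in `J`. -/
def cubeJ {N : ℕ} (J : Finset (Fin N)) : Set (Fin N → ℕ) := {α | ∀ i, i ∉ J → α i = 0}

/-- The set `R_k = {α ∈ (ℤ_{≥0}^N)_{d-v_k} | α + e_k ∈ R}`. -/
def shiftR {N : ℕ} (v : Fin N → ℕ) (d : ℕ) (R : Set (Fin N → ℕ)) (k : Fin N) :
    Set (Fin N → ℕ) :=
  {α | α ∈ latAt v (d - v k) ∧ α + stdBasisVec k ∈ R}

/-- Condition (C1). -/
def CondC1 {N : ℕ} (v : Fin N → ℕ) (d : ℕ) (R : Set (Fin N → ℕ)) : Prop :=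
  ∀ J : Finset (Fin N), J.Nonempty →
    (R ∩ cubeJ J).Nonempty ∨
      ∃ K : Finset (Fin N), K ⊆ Jᶜ ∧ K.card = J.card ∧
        ∀ k ∈ K, (shiftR v d R k ∩ cubeJ J).Nonempty

/-- Condition (C2). -/
def CondC2 {N : ℕ} (v : Fin N → ℕ) (d : ℕ) (R : Set (Fin N → ℕ)) : Prop :=
  ∀ J : Finset (Fin N), J.Nonempty →
    ∃ K : Finset (Fin N), K.card = J.card ∧
      ∀ k ∈ K, (shiftR v d R k ∩ cubeJ J).Nonempty

lemma sum_add_std {N : ℕ} (v : Fin N → ℕ) (α : Fin N → ℕ) (k : Fin N) :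
    ∑ i, (α + stdBasisVec k) i * v i = (∑ i, α i * v i) + v k := by
  simp only [Pi.add_apply, stdBasisVec, add_mul, Finset.sum_add_distrib, ite_mul, one_mul,
    zero_mul, Finset.sum_ite_eq', Finset.mem_univ, if_true]

lemma sub_add_std {N : ℕ} {γ : Fin N → ℕ} {j : Fin N} (hj : 1 ≤ γ j) :
    (γ - stdBasisVec j) + stdBasisVec j = γ := by
  funext i
  by_cases h : i = j <;> simp [stdBasisVec, h, Pi.sub_apply] <;> omega

lemma exists_pos_of_latAt {N : ℕ} {v : Fin N → ℕ} {m : ℕ} (hm : 0 < m)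
    {β : Fin N → ℕ} (hβ : β ∈ latAt v m) : ∃ j, 1 ≤ β j := by
  by_contra h
  push_neg at h
  have hz : ∀ j, β j = 0 := fun j => Nat.lt_one_iff.1 (h j)
  simp only [latAt, Set.mem_setOf_eq] at hβ
  rw [Finset.sum_eq_zero (fun i _ => by simp [hz i])] at hβ
  omega

lemma sub_mem_shiftR {N : ℕ} {v : Fin N → ℕ} {d : ℕ} {R : Set (Fin N → ℕ)}
    (hR : R ⊆ latAt v d) {γ : Fin N → ℕ} (hγ : γ ∈ R) {j : Fin N} (hj : 1 ≤ γ j) :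
    γ - stdBasisVec j ∈ shiftR v d R j := by
  have hadd := sub_add_std hj
  have hd : ∑ i, γ i * v i = d := hR hγ
  have hsum := sum_add_std v (γ - stdBasisVec j) j
  rw [hadd, hd] at hsum
  refine ⟨?_, by rw [hadd]; exact hγ⟩
  simp only [latAt, Set.mem_setOf_eq]
  omega

lemma sub_mem_cubeJ {N : ℕ} {J : Finset (Fin N)} {γ : Fin N → ℕ} (hγ : γ ∈ cubeJ J)
    (j : Fin N) : γ - stdBasisVec j ∈ cubeJ J := by
  intro i hi
  have := hγ i hi
  simp [Pi.sub_apply, this]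

lemma cubeJ_mono {N : ℕ} {J J' : Finset (Fin N)} (h : J ⊆ J') : cubeJ J ⊆ cubeJ J' :=
  fun α hα i hi => hα i (fun hmem => hi (h hmem))

/-- Lemma 2.1 of Hertling–Kurbel: conditions (C1) and (C2) are equivalent
for any subset `R ⊆ (ℤ_{≥0}^N)_d` and any weight system `(v_1,…,v_N,d)`. -/
theorem condC1_iff_condC2 (N : ℕ) (hN : 1 ≤ N) (v : Fin N → ℕ) (d : ℕ)
    (hv : ∀ i, 0 < v i) (hvd : ∀ i, v i < d)
    (R : Set (Fin N → ℕ)) (hR : R ⊆ latAt v d) :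
    CondC1 v d R ↔ CondC2 v d R := by
  classical
  have hd0 : 0 < d := lt_of_le_of_lt (Nat.zero_le _) (hvd ⟨0, hN⟩)
  constructor
  · intro h1 J hJ
    set G : Finset (Fin N) :=
      Finset.univ.filter (fun k => (shiftR v d R k ∩ cubeJ J).Nonempty) with hG
    have hGmem : ∀ k, k ∈ G ↔ (shiftR v d R k ∩ cubeJ J).Nonempty := by
      intro k; simp [hG]
    set U : Finset (Fin N) := J \ G with hU
    by_cases hUe : U = ∅
    · refine ⟨J, rfl, fun k hk => ?_⟩
      have hkG : k ∈ G := by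
        by_contra hkG
        have : k ∈ U := Finset.mem_sdiff.2 ⟨hk, hkG⟩
        simp [hUe] at this
      exact (hGmem k).1 hkG
    · have hUne : U.Nonempty := Finset.nonempty_iff_ne_empty.2 hUe
      have hUJ : U ⊆ J := by rw [hU]; exact Finset.sdiff_subset
      have hcube : cubeJ U ⊆ cubeJ J := cubeJ_mono hUJ
      rcases h1 U hUne with ⟨α, hαR, hαU⟩ | ⟨K, hKsub, hKcard, hKgood⟩
      · exfalso
        have hα : α ∈ latAt v d := hR hαR
        obtain ⟨j, hj⟩ := exists_pos_of_latAt hd0 hα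
        have hjU : j ∈ U := by
          by_contra hjU
          have := hαU j hjU
          omega
        have hjG : j ∈ G := (hGmem j).2
          ⟨α - stdBasisVec j, sub_mem_shiftR hR hαR hj, hcube (sub_mem_cubeJ hαU j)⟩
        have := Finset.mem_sdiff.1 hjU
        exact this.2 hjG
      · -- branch (b)
        have hKG : ∀ k ∈ K, k ∈ G := by
          intro k hk
          obtain ⟨β, hβs, hβU⟩ := hKgood k hk
          exact (hGmem k).2 ⟨β, hβs, hcube hβU⟩
        have hKJ : ∀ k ∈ K, k ∉ J := by
          intro k hk hkJ
          obtain ⟨β, hβs, hβU⟩ := hKgood k hk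
          have hβlat : β ∈ latAt v (d - v k) := hβs.1
          have hdk : 0 < d - v k := by have := hvd k; omega
          obtain ⟨j, hj⟩ := exists_pos_of_latAt hdk hβlat
          have hjU : j ∈ U := by
            by_contra hjU
            have := hβU j hjU
            omega
          set γ : Fin N → ℕ := β + stdBasisVec k with hγdef
          have hγR : γ ∈ R := hβs.2
          have hγJ : γ ∈ cubeJ J := by
            intro i hi
            have hik : i ≠ k := fun e => hi (e ▸ hkJ)
            have hiU : i ∉ U := fun h => hi (hUJ h)
            simp [hγdef, stdBasisVec, hik, hβU i hiU]
          have hγj : 1 ≤ γ j := by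
            have : β j ≤ γ j := by simp [hγdef]
            omega
          have hjG : j ∈ G := (hGmem j).2
            ⟨γ - stdBasisVec j, sub_mem_shiftR hR hγR hγj, sub_mem_cubeJ hγJ j⟩
          exact (Finset.mem_sdiff.1 hjU).2 hjG
        refine ⟨(J ∩ G) ∪ K, ?_, fun k hk => ?_⟩
        · have hdisj : Disjoint (J ∩ G) K := by
            rw [Finset.disjoint_right]
            intro k hk hkJG
            exact hKJ k hk (Finset.mem_inter.1 hkJG).1
          rw [Finset.card_union_of_disjoint hdisj, hKcard]
          have h1 : U.card = (J \ G).card := by rw [hU]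
          have h2 : (J ∩ G).card + (J \ G).card = J.card :=
            Finset.card_inter_add_card_sdiff J G
          omega
        · rcases Finset.mem_union.1 hk with hk | hk
          · exact (hGmem k).1 (Finset.mem_inter.1 hk).2
          · exact (hGmem k).1 (hKG k hk)
  · intro h2 J hJ
    obtain ⟨K, hKcard, hKgood⟩ := h2 J hJ
    by_cases hKJ : (K ∩ J).Nonempty
    · left
      obtain ⟨k, hk⟩ := hKJ
      have hkK := (Finset.mem_inter.1 hk).1
      have hkJ := (Finset.mem_inter.1 hk).2
      obtain ⟨β, hβs, hβJ⟩ := hKgood k hkK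
      refine ⟨β + stdBasisVec k, hβs.2, fun i hi => ?_⟩
      have hik : i ≠ k := fun e => hi (e ▸ hkJ)
      simp [stdBasisVec, hik, hβJ i hi]
    · right
      refine ⟨K, ?_, hKcard, hKgood⟩
      intro k hk
      simp only [Finset.mem_compl]
      intro hkJ
      exact hKJ ⟨k, Finset.mem_inter.2 ⟨hk, hkJ⟩⟩
end

section
/- Let (v_1,…,v_N,d) be a weight system and let R ⊆ (ℤ_{≥0}^N)_d be any subset. Then R satisfies condition (C2) if and only if R satisfies condition (C2)', i.e. it suffices to verify (C2) for the nonempty subsets J ⊆ I with |J| ≤ (N+1)/2. -/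
open MvPolynomial

/-- Condition (C2)': condition (C2) restricted to the subsets `J` with `|J| ≤ (N+1)/2`. -/
def CondC2' {N : ℕ} (v : Fin N → ℕ) (d : ℕ) (R : Set (Fin N → ℕ)) : Prop :=
  ∀ J : Finset (Fin N), J.Nonempty → 2 * J.card ≤ N + 1 →
    ∃ K : Finset (Fin N), K.card = J.card ∧
      ∀ k ∈ K, (shiftR v d R k ∩ cubeJ J).Nonempty

/-- Key lemma: if `T ⊆ J` is disjoint from `E(J) = {k | R_k ∩ ℤ^J ≠ ∅}`, then any `k` with
`R_k ∩ ℤ^T ≠ ∅` lies in `E(J) \ J`. -/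
lemma keyA {N : ℕ} (v : Fin N → ℕ) (d : ℕ) (hvd : ∀ i, v i < d)
    (R : Set (Fin N → ℕ)) (hR : R ⊆ latAt v d)
    (J T : Finset (Fin N)) (hTJ : T ⊆ J)
    (hTE : ∀ j ∈ T, ¬ (shiftR v d R j ∩ cubeJ J).Nonempty)
    (k : Fin N) (hk : (shiftR v d R k ∩ cubeJ T).Nonempty) :
    (shiftR v d R k ∩ cubeJ J).Nonempty ∧ k ∉ J := by
  obtain ⟨α, ⟨hlat, hmem⟩, hcube⟩ := hk
  have hcubeJ : α ∈ cubeJ J := fun i hi => hcube i (fun hiT => hi (hTJ hiT))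
  refine ⟨⟨α, ⟨hlat, hmem⟩, hcubeJ⟩, ?_⟩
  intro hkJ
  -- find j in the support of α
  have hpos : 0 < d - v k := Nat.sub_pos_of_lt (hvd k)
  have hα : ∃ j, α j ≠ 0 := by
    by_contra hcon
    push_neg at hcon
    have : ∑ i, α i * v i = 0 := by
      apply Finset.sum_eq_zero; intro i _; rw [hcon i]; ring
    rw [hlat] at this; omega
  obtain ⟨j, hj⟩ := hα
  have hjT : j ∈ T := by
    by_contra h; exact hj (hcube j h)
  apply hTE j hjT
  set β := α + stdBasisVec k with hβ
  have hβj : 1 ≤ β j := by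
    have : 1 ≤ α j := Nat.one_le_iff_ne_zero.mpr hj
    calc 1 ≤ α j := this
    _ ≤ β j := by simp [hβ, Pi.add_apply]
  set γ : Fin N → ℕ := fun i => β i - stdBasisVec j i with hγ
  have hγβ : γ + stdBasisVec j = β := by
    funext i
    simp only [Pi.add_apply, hγ, stdBasisVec]
    by_cases h : i = j
    · simp only [if_pos h]
      subst h
      omega
    · simp only [if_neg h]
      omega
  have hβR : β ∈ R := hmem
  have hβlat : ∑ i, β i * v i = d := hR hβR
  have hej : ∑ i, stdBasisVec j i * v i = v j := by
    simp only [stdBasisVec, ite_mul, one_mul, zero_mul]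
    rw [Finset.sum_ite_eq' Finset.univ j (fun i => v i)]
    simp
  have hγlat : ∑ i, γ i * v i = d - v j := by
    have : ∑ i, γ i * v i + v j = d := by
      rw [← hej, ← Finset.sum_add_distrib]
      rw [← hβlat]
      apply Finset.sum_congr rfl
      intro i _
      have : γ i + stdBasisVec j i = β i := congrFun hγβ i
      rw [← this]; ring
    omega
  refine ⟨γ, ⟨hγlat, ?_⟩, ?_⟩
  · rw [hγβ]; exact hmem
  · intro i hi
    have hiT : i ∉ T := fun h => hi (hTJ h)
    have hαi : α i = 0 := hcube i hiT
    have hik : i ≠ k := fun h => hi (h ▸ hkJ)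
    simp [hγ, hβ, Pi.add_apply, hαi, stdBasisVec, hik]

/-- Lemma 2.1 of Hertling–Kurbel: conditions (C2) and (C2)' are equivalent
for any subset `R ⊆ (ℤ_{≥0}^N)_d` and any weight system `(v_1,…,v_N,d)`. -/
theorem condC2_iff_condC2' (N : ℕ) (hN : 1 ≤ N) (v : Fin N → ℕ) (d : ℕ)
    (hv : ∀ i, 0 < v i) (hvd : ∀ i, v i < d)
    (R : Set (Fin N → ℕ)) (hR : R ⊆ latAt v d) :
    CondC2 v d R ↔ CondC2' v d R := by
  classical
  constructor
  · intro h J hJ _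
    exact h J hJ
  · intro h J hJne
    by_cases hsmall : 2 * J.card ≤ N + 1
    · exact h J hJne hsmall
    · push_neg at hsmall
      have hm : J.card ≤ N := by
        have := Finset.card_le_univ J
        simpa using this
      set E := Finset.univ.filter (fun k => (shiftR v d R k ∩ cubeJ J).Nonempty) with hE
      have hEmem : ∀ k, k ∈ E ↔ (shiftR v d R k ∩ cubeJ J).Nonempty := by
        intro k; simp [hE]
      set S := J \ E with hS
      have hSJ : S ⊆ J := Finset.sdiff_subset
      have hSE : ∀ j ∈ S, ¬ (shiftR v d R j ∩ cubeJ J).Nonempty := by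
        intro j hj hne
        have : j ∉ E := (Finset.mem_sdiff.mp hj).2
        exact this ((hEmem j).mpr hne)
      -- Step 1 : S.card ≤ N - J.card
      have hScard : S.card + J.card ≤ N := by
        by_contra hge
        push_neg at hge
        have hb : N + 1 - J.card ≤ S.card := by omega
        obtain ⟨T, hTS, hTcard⟩ := Finset.exists_subset_card_eq hb
        have hTne : T.Nonempty := by
          rw [← Finset.card_pos, hTcard]; omega
        obtain ⟨K, hKcard, hK⟩ := h T hTne (by omega)
        have hKsub : K ⊆ Jᶜ := by
          intro k hk
          rw [Finset.mem_compl]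
          exact (keyA v d hvd R hR J T (hTS.trans hSJ)
            (fun j hj => hSE j (hTS hj)) k (hK k hk)).2
        have h1 : K.card ≤ Jᶜ.card := Finset.card_le_card hKsub
        have h2 : Jᶜ.card = N - J.card := by
          rw [Finset.card_compl]; simp
        omega
      -- Step 2
      by_cases hSne : S.Nonempty
      · obtain ⟨K, hKcard, hK⟩ := h S hSne (by omega)
        have hKsub : K ⊆ E \ J := by
          intro k hk
          have := keyA v d hvd R hR J S hSJ hSE k (hK k hk)
          rw [Finset.mem_sdiff]
          exact ⟨(hEmem k).mpr this.1, this.2⟩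
        have hJSsub : J \ S ⊆ E := by
          intro j hj
          rw [Finset.mem_sdiff] at hj
          by_contra hcon
          exact hj.2 (Finset.mem_sdiff.mpr ⟨hj.1, hcon⟩)
        have hdisj : Disjoint (J \ S) K := by
          apply Finset.disjoint_left.mpr
          intro a ha hak
          have : a ∉ J := (Finset.mem_sdiff.mp (hKsub hak)).2
          exact this (Finset.mem_sdiff.mp ha).1
        have hunion : (J \ S) ∪ K ⊆ E := by
          apply Finset.union_subset hJSsub
          exact hKsub.trans Finset.sdiff_subset
        have hcount : J.card ≤ E.card := by
          have h1 : ((J \ S) ∪ K).card = (J \ S).card + K.card :=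
            Finset.card_union_of_disjoint hdisj
          have h2 : (J \ S).card + S.card = J.card :=
            Finset.card_sdiff_add_card_eq_card hSJ
          have h3 : ((J \ S) ∪ K).card ≤ E.card := Finset.card_le_card hunion
          omega
        obtain ⟨K', hK'sub, hK'card⟩ := Finset.exists_subset_card_eq hcount
        exact ⟨K', hK'card, fun k hk => (hEmem k).mp (hK'sub hk)⟩
      · have hJE : J ⊆ E := by
          intro j hj
          by_contra hcon
          exact hSne ⟨j, Finset.mem_sdiff.mpr ⟨hj, hcon⟩⟩
        exact ⟨J, rfl, fun k hk => (hEmem k).mp (hJE hk)⟩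
end

section
/- Let (v_1,…,v_N,d) be a weight system and let f ∈ ℂ[x_1,…,x_N] be quasihomogeneous with respect to (v_1,…,v_N,d) and nondegenerate. Then the set R = supp(f) ⊆ (ℤ_{≥0}^N)_d of exponent vectors of monomials occurring in f satisfies condition (C1). -/
open MvPolynomial

/-- A polynomial is nondegenerate if the only common zero of all its partial
derivatives is the origin. -/
def IsNondegenerate {N : ℕ} (f : MvPolynomial (Fin N) ℂ) : Prop :=
  {x : Fin N → ℂ | ∀ i, MvPolynomial.eval x (MvPolynomial.pderiv i f) = 0} = {0}

/-- The support of a polynomial, viewed as a set of exponent vectors in `ℤ_{≥0}^N`. -/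
def suppSet {N : ℕ} (f : MvPolynomial (Fin N) ℂ) : Set (Fin N → ℕ) :=
  {α | ∃ m ∈ f.support, ∀ i, m i = α i}

/-!
Suppose `R ∩ ℤ^J = ∅` but fewer than `|J|` indices `k ∉ J` have `R_k ∩ ℤ^J ≠ ∅`. On the
coordinate subspace `ℂ^J` every `∂_i f` then vanishes identically except these `∂_k f`, each of
which vanishes at the origin because `v_k < d` keeps the linear monomial `x_k` out of `f`.
Together with the coordinates `x_i`, `i ∉ J`, they are fewer than `N` polynomials with a common
zero at the origin. By the Nullstellensatz and Krull's height theorem such a system has a nonzero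
common zero (a maximal ideal of `ℂ[x]` has height `N`), and that zero is a nonzero critical point
of `f`.
-/

namespace MvPolynomial

theorem eval_eq_zero_of_forall_mem_support {R σ : Type*} [CommSemiring R]
    {p : MvPolynomial σ R} {y : σ → R} (h : ∀ m ∈ p.support, ∃ i, m i ≠ 0 ∧ y i = 0) :
    eval y p = 0 := by
  rw [eval_eq]
  refine Finset.sum_eq_zero fun m hm => ?_
  obtain ⟨i, hmi, hyi⟩ := h m hm
  rw [Finset.prod_eq_zero (Finsupp.mem_support_iff.mpr hmi) (by simp [hyi, hmi]), mul_zero]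

theorem add_single_mem_support_of_mem_support_pderiv {R σ : Type*} [CommSemiring R]
    {p : MvPolynomial σ R} {i : σ} {m : σ →₀ ℕ} (hm : m ∈ (pderiv i p).support) :
    m + Finsupp.single i 1 ∈ p.support := by
  rw [mem_support_iff, coeff_pderiv] at hm
  exact mem_support_iff.mpr (left_ne_zero_of_mul hm)

theorem eval_bind₁_X_add_C {R σ : Type*} [CommRing R] (c y : σ → R) (p : MvPolynomial σ R) :
    eval y (bind₁ (fun i => X i + C (c i)) p) = eval (y + c) p := by
  induction p using MvPolynomial.induction_on <;> simp_all

section AlgClosed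

variable {σ K : Type*} [Field K] [IsAlgClosed K] [Finite σ]

theorem exists_height_vanishingIdeal_singleton_eq :
    ∃ b : σ → K, (vanishingIdeal K {b} : Ideal (MvPolynomial σ K)).height = Nat.card σ := by
  have hdim : ringKrullDim (MvPolynomial σ K) = Nat.card σ := by simp
  have : FiniteRingKrullDim (MvPolynomial σ K) :=
    finiteRingKrullDim_iff_ne_bot_and_top.mpr ⟨by simp [hdim], by
      rw [hdim]
      exact fun h => ENat.natCast_ne_top _ (WithBot.coe_injective h)⟩
  obtain ⟨M, hM, hMh⟩ := Ideal.exists_isMaximal_height (R := MvPolynomial σ K)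
  obtain ⟨b, rfl⟩ := eq_vanishingIdeal_singleton_of_isMaximal K hM
  exact ⟨b, by exact_mod_cast hMh.trans hdim⟩

theorem height_vanishingIdeal_singleton_le_card {κ : Type*} [Finite κ]
    (g : κ → MvPolynomial σ K) {b : σ → K}
    (h : zeroLocus K (Ideal.span (Set.range g)) = {b}) :
    (vanishingIdeal K {b} : Ideal (MvPolynomial σ K)).height ≤ Nat.card κ := by
  have hrad : (Ideal.span (Set.range g)).radical = vanishingIdeal K {b} := by
    rw [← vanishingIdeal_zeroLocus_eq_radical (K := K), h]
  have : (vanishingIdeal K {b} : Ideal (MvPolynomial σ K)).IsPrime :=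
    (isMaximal_iff_eq_vanishingIdeal_singleton.mpr ⟨b, rfl⟩).isPrime
  have hmin : vanishingIdeal K {b} ∈ (Ideal.span (Set.range g)).minimalPrimes := by
    rw [← Ideal.radical_minimalPrimes, hrad, Ideal.minimalPrimes_eq_subsingleton_self]
    rfl
  calc _ ≤ ((Set.range g).ncard : ℕ∞) :=
        Ideal.height_le_card_of_mem_minimalPrimes_span (Set.finite_range g) hmin
    _ ≤ Nat.card κ := by
        rw [← Nat.card_coe_set_eq]
        exact_mod_cast Finite.card_range_le g

theorem exists_ne_common_zero_of_card_lt {κ : Type*} [Finite κ]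
    (hcard : Nat.card κ < Nat.card σ) (g : κ → MvPolynomial σ K) {a : σ → K}
    (ha : ∀ k, eval a (g k) = 0) : ∃ y ≠ a, ∀ k, eval y (g k) = 0 := by
  obtain ⟨b, hb⟩ := exists_height_vanishingIdeal_singleton_eq (σ := σ) (K := K)
  -- move the common zero `a` to the point `b`, whose ideal has the full height `Nat.card σ`
  set g' : κ → MvPolynomial σ K := fun k => bind₁ (fun i => X i + C ((a - b) i)) (g k)
  by_contra! h
  suffices hzero : zeroLocus K (Ideal.span (Set.range g')) = {b} by
    have := height_vanishingIdeal_singleton_le_card g' hzero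
    rw [hb] at this
    exact hcard.not_ge (by exact_mod_cast this)
  refine Set.eq_singleton_iff_unique_mem.mpr ⟨fun p hp => ?_, fun y hy => ?_⟩
  · have hle : Ideal.span (Set.range g') ≤ vanishingIdeal K {b} := by
      rw [Ideal.span_le, Set.range_subset_iff]
      intro k
      rw [SetLike.mem_coe, mem_vanishingIdeal_singleton_iff, aeval_eq_eval, eval_bind₁_X_add_C]
      simpa using ha k
    exact (mem_vanishingIdeal_singleton_iff b p).mp (hle hp)
  · by_contra hyb
    obtain ⟨k, hk⟩ := h (y + (a - b)) (by contrapose! hyb; simpa using congrArg (· - (a - b)) hyb)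
    refine hk ?_
    rw [← eval_bind₁_X_add_C, ← aeval_eq_eval]
    exact hy (g' k) (Ideal.subset_span ⟨k, rfl⟩)

end AlgClosed

end MvPolynomial

theorem Finsupp.sum_add_single_one_mul {σ : Type*} [Fintype σ] (w : σ → ℕ) (m : σ →₀ ℕ)
    (k : σ) : ∑ i, (m + Finsupp.single k 1 : σ →₀ ℕ) i * w i = ∑ i, m i * w i + w k := by
  classical
  simp [add_mul, Finset.sum_add_distrib, Finsupp.single_apply]

section

variable {N : ℕ} {v : Fin N → ℕ} {d : ℕ} {f : MvPolynomial (Fin N) ℂ}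

theorem mem_shiftR_suppSet_of_mem_support_pderiv
    (hqh : ∀ m ∈ f.support, ∑ i, m i * v i = d) {k : Fin N} {m : Fin N →₀ ℕ}
    (hm : m ∈ (pderiv k f).support) : ⇑m ∈ shiftR v d (suppSet f) k := by
  have hmk := add_single_mem_support_of_mem_support_pderiv hm
  refine ⟨?_, m + Finsupp.single k 1, hmk, fun i => ?_⟩
  · have := hqh _ hmk
    rw [Finsupp.sum_add_single_one_mul] at this
    simp only [latAt, Set.mem_ofPred_eq]
    omega
  · simp [stdBasisVec, Finsupp.single_apply, eq_comm]

theorem shiftR_inter_cubeJ_nonempty_of_mem {R : Set (Fin N → ℕ)} {J : Finset (Fin N)}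
    {k : Fin N} (hk : k ∈ J) (h : (shiftR v d R k ∩ cubeJ J).Nonempty) :
    (R ∩ cubeJ J).Nonempty := by
  obtain ⟨α, ⟨-, hαR⟩, hαJ⟩ := h
  refine ⟨_, hαR, fun i hi => ?_⟩
  simp [hαJ i hi, stdBasisVec, show i ≠ k from fun h => hi (h ▸ hk)]

theorem eval_pderiv_eq_zero_of_shiftR_inter_cubeJ_eq_empty
    (hqh : ∀ m ∈ f.support, ∑ i, m i * v i = d) {J : Finset (Fin N)} {k : Fin N}
    (hk : ¬(shiftR v d (suppSet f) k ∩ cubeJ J).Nonempty) {y : Fin N → ℂ}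
    (hy : ∀ i ∉ J, y i = 0) : eval y (pderiv k f) = 0 := by
  refine eval_eq_zero_of_forall_mem_support fun m hm => ?_
  by_contra! hyJ
  refine hk ⟨m, mem_shiftR_suppSet_of_mem_support_pderiv hqh hm, fun i hi => ?_⟩
  by_contra hmi
  exact hyJ i hmi (hy i hi)

theorem eval_zero_pderiv_eq_zero (hqh : ∀ m ∈ f.support, ∑ i, m i * v i = d) {k : Fin N}
    (hk : v k < d) : eval 0 (pderiv k f) = 0 := by
  refine eval_eq_zero_of_forall_mem_support fun m hm => ?_
  obtain ⟨i, hi⟩ : ∃ i, m i ≠ 0 := by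
    by_contra! h0
    have := hqh _ (add_single_mem_support_of_mem_support_pderiv hm)
    rw [Finsupp.sum_add_single_one_mul] at this
    simp only [h0, zero_mul, Finset.sum_const_zero, zero_add] at this
    omega
  exact ⟨i, hi, rfl⟩

end

theorem suppSet_condC1_of_nondegenerate_general (N : ℕ) (v : Fin N → ℕ) (d : ℕ)
    (hvd : ∀ i, v i < d)
    (f : MvPolynomial (Fin N) ℂ)
    (hqh : ∀ m ∈ f.support, ∑ i, m i * v i = d)
    (hnd : IsNondegenerate f) :
    CondC1 v d (suppSet f) := by
  classical
  intro J _
  by_cases hR : (suppSet f ∩ cubeJ J).Nonempty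
  · exact Or.inl hR
  right
  set K₀ := Jᶜ.filter fun k => (shiftR v d (suppSet f) k ∩ cubeJ J).Nonempty
  by_cases hK : J.card ≤ K₀.card
  · obtain ⟨K, hKsub, hKcard⟩ := Finset.exists_subset_card_eq hK
    exact ⟨K, hKsub.trans (Finset.filter_subset _ _), hKcard,
      fun k hk => (Finset.mem_filter.mp (hKsub hk)).2⟩
  exfalso
  let g : K₀ ⊕ (Jᶜ : Finset (Fin N)) → MvPolynomial (Fin N) ℂ :=
    Sum.elim (fun k => pderiv (k : Fin N) f) (fun i => X (i : Fin N))
  have hcard : Nat.card (K₀ ⊕ (Jᶜ : Finset (Fin N))) < Nat.card (Fin N) := by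
    have hJN : J.card ≤ N := by simpa using J.card_le_univ
    simp only [Finset.mem_compl, Nat.card_eq_fintype_card, Fintype.card_sum, Fintype.card_coe,
      Fintype.card_subtype_compl, Fintype.card_fin]
    omega
  obtain ⟨y, hy0, hy⟩ := exists_ne_common_zero_of_card_lt hcard g (a := 0) (by
    rintro (k | i)
    · exact eval_zero_pderiv_eq_zero hqh (hvd k)
    · simp [g])
  have hyJ : ∀ i ∉ J, y i = 0 := fun i hi => by simpa [g] using hy (.inr ⟨i, by simpa⟩)
  refine hy0 ((Set.eq_singleton_iff_unique_mem.mp hnd).2 y fun k => ?_)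
  by_cases hk : k ∈ K₀
  · exact hy (.inl ⟨k, hk⟩)
  refine eval_pderiv_eq_zero_of_shiftR_inter_cubeJ_eq_empty hqh ?_ hyJ
  by_cases hkJ : k ∈ J
  · exact fun h => hR (shiftR_inter_cubeJ_nonempty_of_mem hkJ h)
  · exact fun h => hk (Finset.mem_filter.mpr ⟨Finset.mem_compl.mpr hkJ, h⟩)

/-- If `f` is quasihomogeneous with respect to the weight system `(v_1,…,v_N,d)` and
nondegenerate, then `R = supp f` satisfies condition (C1). -/
theorem suppSet_condC1_of_nondegenerate (N : ℕ) (hN : 1 ≤ N) (v : Fin N → ℕ) (d : ℕ)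
    (hv : ∀ i, 0 < v i) (hvd : ∀ i, v i < d)
    (f : MvPolynomial (Fin N) ℂ)
    (hqh : ∀ m ∈ f.support, ∑ i, m i * v i = d)
    (hnd : IsNondegenerate f) :
    CondC1 v d (suppSet f) :=
  suppSet_condC1_of_nondegenerate_general N v d hvd f hqh hnd
end

section
/- Let f ∈ ℂ[x_1,…,x_N] be quasihomogeneous with respect to a weight system (v_1,…,v_N,d) and nondegenerate. Let g = (g_1,…,g_N) ∈ (ℂ^*)^N be a diagonal symmetry of f, i.e. f(g_1 x_1, …, g_N x_N) = f(x_1,…,x_N), and suppose the set I_g = {i ∈ {1,…,N} : g_i = 1} is nonempty. Let f^g be the polynomial in the variables (x_i)_{i ∈ I_g} obtained from f by substituting x_i = 0 for every i ∉ I_g. Then f^g is nondegenerate: the only point of ℂ^{I_g} at which all partial derivatives ∂f^g/∂x_i (i ∈ I_g) vanish simultaneously is the origin. -/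
open MvPolynomial

open scoped Classical

/-- The restriction `f^g` of `f` to the fixed locus of the diagonal symmetry `g`:
the variables `x_i` with `g i ≠ 1` are set to `0`. -/
noncomputable def fixedRestriction {N : ℕ} (f : MvPolynomial (Fin N) ℂ) (g : Fin N → ℂ) :
    MvPolynomial (Fin N) ℂ :=
  aeval (fun j => if g j = 1 then X j else 0) f

private lemma eval_aeval' {N : ℕ} (x : Fin N → ℂ) (σ : Fin N → MvPolynomial (Fin N) ℂ)
    (p : MvPolynomial (Fin N) ℂ) :
    eval x (aeval σ p) = eval (fun j => eval x (σ j)) p := by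
  rw [aeval_eq_eval₂Hom, coe_eval₂Hom, eval_eval₂]
  have : ((eval x).comp (algebraMap ℂ (MvPolynomial (Fin N) ℂ))) = RingHom.id ℂ := by
    ext a; simp
  rw [this, eval₂_id]

/-- Chain rule for the scaling substitution. -/
private lemma pderiv_aeval_scale {N : ℕ} (g : Fin N → ℂ) (i : Fin N)
    (p : MvPolynomial (Fin N) ℂ) :
    pderiv i (aeval (fun j => C (g j) * X j) p)
      = C (g i) * aeval (fun j => C (g j) * X j) (pderiv i p) := by
  induction p using MvPolynomial.induction_on with
  | C a => simp
  | add p q hp hq => simp only [map_add, hp, hq, mul_add]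
  | mul_X p j hp =>
      by_cases h : j = i
      · subst h
        simp only [map_mul, aeval_X, pderiv_mul, pderiv_C_mul, pderiv_X_self, mul_one,
          hp, map_add, pderiv_C, zero_mul, zero_add]
        ring
      · simp only [map_mul, aeval_X, pderiv_mul, pderiv_C_mul, pderiv_X_of_ne h,
          mul_zero, add_zero, hp, pderiv_C, zero_mul]
        ring

/-- Chain rule for the restriction substitution, for a fixed index. -/
private lemma pderiv_fixedRestriction {N : ℕ} (g : Fin N → ℂ) (i : Fin N) (hi : g i = 1)
    (p : MvPolynomial (Fin N) ℂ) :
    pderiv i (aeval (fun j => if g j = 1 then X j else (0 : MvPolynomial (Fin N) ℂ)) p)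
      = aeval (fun j => if g j = 1 then X j else (0 : MvPolynomial (Fin N) ℂ)) (pderiv i p) := by
  induction p using MvPolynomial.induction_on with
  | C a => simp
  | add p q hp hq => simp only [map_add, hp, hq]
  | mul_X p j hp =>
      by_cases h : j = i
      · subst h
        simp only [map_mul, aeval_X, pderiv_mul, hi, if_true, pderiv_X_self, mul_one,
          hp, map_add]
      · by_cases hj : g j = 1
        · simp only [map_mul, aeval_X, pderiv_mul, hj, if_true, pderiv_X_of_ne h,
            mul_zero, add_zero, hp]
        · simp only [map_mul, aeval_X, pderiv_mul, hj, if_false, pderiv_X_of_ne h,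
            mul_zero, add_zero, zero_mul, map_zero, hp]

/-- If `f` is a nondegenerate quasihomogeneous polynomial and `g` is a diagonal symmetry
of `f` with nonempty fixed index set `I_g = {i | g i = 1}`, then the restriction `f^g`
of `f` to the fixed locus is again nondegenerate: the only point of `ℂ^{I_g}` at which
all the partial derivatives `∂f^g/∂x_i` (`i ∈ I_g`) vanish is the origin. -/
theorem fixedRestriction_nondegenerate (N : ℕ) (hN : 1 ≤ N) (v : Fin N → ℕ) (d : ℕ)
    (hv : ∀ i, 0 < v i) (hvd : ∀ i, v i < d)
    (f : MvPolynomial (Fin N) ℂ)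
    (hqh : ∀ m ∈ f.support, ∑ i, m i * v i = d)
    (hnd : IsNondegenerate f)
    (g : Fin N → ℂ) (hg : ∀ i, g i ≠ 0)
    (hsym : ∀ x : Fin N → ℂ, eval (fun i => g i * x i) f = eval x f)
    (hIg : ∃ i, g i = 1) :
    {x : Fin N → ℂ |
        (∀ i, g i ≠ 1 → x i = 0) ∧
        ∀ i, g i = 1 → eval x (pderiv i (fixedRestriction f g)) = 0} = {0} := by
  -- the symmetry as a polynomial identity
  have hpoly : aeval (fun j => C (g j) * X j) f = f := by
    apply MvPolynomial.funext
    intro x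
    have := hsym x
    rw [eval_aeval']
    simpa using this
  -- zero is a common zero of all partial derivatives of f
  have h0 : ∀ i, eval (0 : Fin N → ℂ) (pderiv i f) = 0 := by
    have : (0 : Fin N → ℂ) ∈ {x : Fin N → ℂ | ∀ i, eval x (pderiv i f) = 0} := by
      rw [hnd]; rfl
    exact this
  ext x
  simp only [Set.mem_setOf_eq, Set.mem_singleton_iff]
  constructor
  · rintro ⟨hx0, hxd⟩
    -- key: all partial derivatives of f vanish at x
    have hkey : ∀ i, eval x (pderiv i f) = 0 := by
      intro i
      by_cases hi : g i = 1
      · have := hxd i hi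
        rw [fixedRestriction, pderiv_fixedRestriction g i hi, eval_aeval'] at this
        have hfun : (fun j => eval x (if g j = 1 then (X j : MvPolynomial (Fin N) ℂ) else 0))
            = x := by
          funext j
          by_cases hj : g j = 1
          · simp [hj]
          · simp [hj, hx0 j hj]
        rwa [hfun] at this
      · -- differentiate the symmetry identity
        have hder : pderiv i (aeval (fun j => C (g j) * X j) f) = pderiv i f := by
          rw [hpoly]
        rw [pderiv_aeval_scale] at hder
        have := congrArg (eval x) hder
        rw [eval_mul, eval_C, eval_aeval'] at this
        have hfun : (fun j => eval x (C (g j) * X j)) = x := by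
          funext j
          by_cases hj : g j = 1
          · simp [hj]
          · simp [hx0 j hj]
        rw [hfun] at this
        -- g i * eval x (pderiv i f) = eval x (pderiv i f), with g i ≠ 1
        have hne : g i - 1 ≠ 0 := sub_ne_zero.mpr hi
        have : (g i - 1) * eval x (pderiv i f) = 0 := by linear_combination this
        exact (mul_eq_zero.mp this).resolve_left hne
    have : x ∈ {y : Fin N → ℂ | ∀ i, eval y (pderiv i f) = 0} := hkey
    rw [hnd] at this
    exact this
  · rintro rfl
    refine ⟨fun i _ => rfl, fun i hi => ?_⟩
    rw [fixedRestriction, pderiv_fixedRestriction g i hi, eval_aeval']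
    have hfun : (fun j => eval (0 : Fin N → ℂ) (if g j = 1 then (X j : MvPolynomial (Fin N) ℂ) else 0))
        = 0 := by
      funext j
      by_cases hj : g j = 1 <;> simp [hj]
    rw [hfun]
    exact h0 i
end

section
/- Let f ∈ ℂ[x_1,…,x_N] be quasihomogeneous with respect to a weight system (v_1,…,v_N,d) and nondegenerate, and assume that no exponent vector α in the support of f has total degree 2 (i.e. f contains no summands of the form x_i x_j or x_i^2). Then f is invertible if and only if there exist a map κ: {1,…,N} → {1,…,N}, integers a_j ≥ 2 and coefficients b_j ∈ ℂ^* such that f = Σ_{j=1}^N b_j x_j^{a_j} x_{κ(j)} (where a fixed point κ(j) = j contributes the term b_j x_j^{a_j+1}). -/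
/-!
Evaluating the partial derivatives of `f` at the basis vector `e_i` kills every monomial
except those of the shape `x_i^a x_j`; by nondegeneracy `f` therefore contains such a monomial
for each `i`, and quasihomogeneity (`v_j < d`) together with the absence of quadratic terms
forces `a ≥ 2`. The index `i` is recovered from `x_i^a x_j` as the variable of exponent `≥ 2`,
so these are `N` distinct monomials of `f`; an invertible polynomial has at most `N`, hence
`f` is exactly their sum. Conversely the exponent matrix of `Σ_j b_j x_j^{a_j} x_{κ(j)}` has
diagonal entries `≥ 2` and at most one further `1` per row, so it is strictly diagonally
dominant and thus invertible.
-/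

open MvPolynomial

/-- A polynomial in `N` variables is invertible if it is a sum of `N` monomials with
nonzero coefficients whose exponent matrix is invertible over `ℚ`. -/
def IsInvertiblePoly {N : ℕ} (f : MvPolynomial (Fin N) ℂ) : Prop :=
  ∃ (cc : Fin N → ℂ) (E : Matrix (Fin N) (Fin N) ℕ),
    (∀ i, cc i ≠ 0) ∧
    f = ∑ i, C (cc i) * ∏ j, X j ^ E i j ∧
    (E.map (fun n : ℕ => (n : ℚ))).det ≠ 0

section Monomials

variable {σ R : Type*} [CommSemiring R]

lemma C_mul_X_pow_mul_X (j k : σ) (a : ℕ) (b : R) :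
    C b * (X j ^ a * X k) = monomial (Finsupp.single j a + Finsupp.single k 1) b := by
  rw [← pow_one (X k), X_pow_eq_monomial, X_pow_eq_monomial, monomial_mul, C_mul_monomial,
    mul_one, mul_one]

lemma prod_univ_X_pow_eq_monomial [Fintype σ] (m : σ →₀ ℕ) :
    ∏ j, (X j : MvPolynomial σ R) ^ m j = monomial m 1 := by
  rw [monomial_eq, C_1, one_mul, Finsupp.prod_fintype _ _ fun _ => pow_zero _]

lemma card_support_sum_le {ι : Type*} (s : Finset ι) (p : ι → MvPolynomial σ R) :
    (∑ i ∈ s, p i).support.card ≤ ∑ i ∈ s, (p i).support.card := by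
  classical
  exact (Finset.card_le_card support_sum).trans Finset.card_biUnion_le

lemma card_support_C_mul_prod_X_pow_le [Fintype σ] (c : R) (e : σ → ℕ) :
    (C c * ∏ j, (X j : MvPolynomial σ R) ^ e j).support.card ≤ 1 := by
  rw [← Finsupp.coe_equivFunOnFinite_symm e, prod_univ_X_pow_eq_monomial, C_mul_monomial, mul_one]
  exact (Finset.card_le_card support_monomial_subset).trans (Finset.card_singleton _).le

lemma eq_sum_monomial_of_support_eq_image {ι : Type*} [Fintype ι] [DecidableEq (σ →₀ ℕ)]
    {f : MvPolynomial σ R} {g : ι → σ →₀ ℕ} (hg : Function.Injective g)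
    (h : f.support = Finset.univ.image g) :
    f = ∑ i, monomial (g i) (coeff (g i) f) := by
  conv_lhs => rw [f.as_sum, h]
  exact Finset.sum_image fun i _ i' _ => (hg ·)

end Monomials

section LoopExponents

variable {σ : Type*}

lemma sum_single_add_single_one [Fintype σ] (i j : σ) (a : ℕ) :
    ∑ k, (Finsupp.single i a + Finsupp.single j 1 : σ →₀ ℕ) k = a + 1 := by
  rw [← Finsupp.degree_eq_sum, map_add, Finsupp.degree_single, Finsupp.degree_single]

lemma eq_of_single_add_single_eq {i i' j j' : σ} {a a' : ℕ} (ha : 2 ≤ a) (ha' : 2 ≤ a')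
    (h : Finsupp.single i a + Finsupp.single j 1 = Finsupp.single i' a' + Finsupp.single j' 1) :
    i = i' := by
  classical
  by_contra hii
  have hi := DFunLike.congr_fun h i
  have hi' := DFunLike.congr_fun h i'
  simp only [Finsupp.add_apply, Finsupp.single_apply] at hi hi'
  split_ifs at hi hi' <;> omega

lemma two_le_of_single_add_single [Fintype σ] {v : σ → ℕ} {d : ℕ} (hvd : ∀ k, v k < d)
    {i j : σ} {a : ℕ}
    (hw : ∑ k, (Finsupp.single i a + Finsupp.single j 1 : σ →₀ ℕ) k * v k = d)
    (hdeg : ∑ k, (Finsupp.single i a + Finsupp.single j 1 : σ →₀ ℕ) k ≠ 2) :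
    2 ≤ a := by
  rw [sum_single_add_single_one] at hdeg
  by_contra! ha
  obtain rfl : a = 0 := by omega
  simp_rw [← smul_eq_mul, ← Finsupp.weight_eq_sum, Finsupp.single_zero, zero_add,
    Finsupp.weight_single, one_smul] at hw
  exact (hvd j).ne hw

lemma sum_erase_single_add_single_lt [Fintype σ] [DecidableEq σ] (i k : σ) {a : ℕ}
    (ha : 2 ≤ a) :
    ∑ j ∈ Finset.univ.erase i, (Finsupp.single i a + Finsupp.single k 1 : σ →₀ ℕ) j <
      (Finsupp.single i a + Finsupp.single k 1 : σ →₀ ℕ) i := by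
  have htotal := Finset.sum_erase_add _
    (fun j => (Finsupp.single i a + Finsupp.single k 1 : σ →₀ ℕ) j) (Finset.mem_univ i)
  have hdiag : a ≤ (Finsupp.single i a + Finsupp.single k 1 : σ →₀ ℕ) i := by simp
  rw [sum_single_add_single_one] at htotal
  omega

end LoopExponents

lemma det_map_natCast_ne_zero_of_sum_row_lt_diag {n : Type*} [Fintype n] [DecidableEq n]
    (E : Matrix n n ℕ) (h : ∀ k, ∑ j ∈ Finset.univ.erase k, E k j < E k k) :
    (E.map (Nat.cast : ℕ → ℚ)).det ≠ 0 := by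
  refine det_ne_zero_of_sum_row_lt_diag fun k => ?_
  simp only [Matrix.map_apply, ← Rat.norm_cast_real, Rat.cast_natCast, RCLike.norm_natCast]
  exact_mod_cast h k

section Nondegenerate

variable {σ R : Type*} [CommSemiring R] [DecidableEq σ]

lemma eval_piSingle_monomial_eq_zero {m : σ →₀ ℕ} {i : σ} (h : m ≠ Finsupp.single i (m i))
    (c : R) : eval (Pi.single i 1) (monomial m c) = 0 := by
  obtain ⟨k, hki, hk⟩ : ∃ k, k ≠ i ∧ m k ≠ 0 := by
    by_contra! hm
    refine h (Finsupp.ext fun k => ?_)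
    by_cases hki : k = i
    · simp [hki]
    · simp [hm k hki, Ne.symm hki]
  rw [eval_monomial, Finsupp.prod]
  refine mul_eq_zero_of_right _ (Finset.prod_eq_zero (Finsupp.mem_support_iff.mpr hk) ?_)
  rw [Pi.single_eq_of_ne hki, zero_pow hk]

lemma eval_piSingle_pderiv_monomial_eq_zero {m : σ →₀ ℕ} {i j : σ}
    (h : ∀ a, m ≠ Finsupp.single i a + Finsupp.single j 1) (c : R) :
    eval (Pi.single i 1) (pderiv j (monomial m c)) = 0 := by
  rw [pderiv_monomial]
  by_cases hmj : m j = 0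
  · simp [hmj]
  refine eval_piSingle_monomial_eq_zero
    (fun hsub => h ((m - Finsupp.single j 1 : σ →₀ ℕ) i) ?_) _
  rw [← hsub, tsub_add_cancel_of_le (Finsupp.single_le_iff.mpr (Nat.one_le_iff_ne_zero.mpr hmj))]

lemma eval_piSingle_pderiv_eq_zero {f : MvPolynomial σ R} {i : σ}
    (h : ∀ a j, Finsupp.single i a + Finsupp.single j 1 ∉ f.support) (j : σ) :
    eval (Pi.single i 1) (pderiv j f) = 0 := by
  rw [f.as_sum, map_sum, map_sum]
  refine Finset.sum_eq_zero fun m hm => eval_piSingle_pderiv_monomial_eq_zero ?_ _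
  rintro a rfl
  exact h a j hm

end Nondegenerate

lemma IsNondegenerate.exists_single_add_single_mem_support {N : ℕ} {f : MvPolynomial (Fin N) ℂ}
    (hnd : IsNondegenerate f) (i : Fin N) :
    ∃ a j, Finsupp.single i a + Finsupp.single j 1 ∈ f.support := by
  by_contra! h
  have hcrit : Pi.single i (1 : ℂ) ∈ {x | ∀ j, eval x (pderiv j f) = 0} :=
    eval_piSingle_pderiv_eq_zero h
  rw [hnd, Set.mem_singleton_iff, Pi.single_eq_zero_iff] at hcrit
  exact one_ne_zero hcrit

lemma IsInvertiblePoly.card_support_le {N : ℕ} {f : MvPolynomial (Fin N) ℂ}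
    (hf : IsInvertiblePoly f) : f.support.card ≤ N := by
  obtain ⟨cc, E, -, rfl, -⟩ := hf
  calc _ ≤ ∑ i, (C (cc i) * ∏ j, (X j : MvPolynomial (Fin N) ℂ) ^ E i j).support.card :=
        card_support_sum_le _ _
    _ ≤ ∑ _i : Fin N, 1 := by gcongr with i; exact card_support_C_mul_prod_X_pow_le _ _
    _ = N := by simp

lemma exists_loop_form_of_card_support_le {N : ℕ} {v : Fin N → ℕ} {d : ℕ}
    (hvd : ∀ i, v i < d) {f : MvPolynomial (Fin N) ℂ}
    (hqh : ∀ m ∈ f.support, ∑ i, m i * v i = d) (hnd : IsNondegenerate f)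
    (hno2 : ∀ m ∈ f.support, (∑ i, m i) ≠ 2) (hcard : f.support.card ≤ N) :
    ∃ (κ : Fin N → Fin N) (a : Fin N → ℕ) (b : Fin N → ℂ),
      (∀ j, 2 ≤ a j) ∧ (∀ j, b j ≠ 0) ∧
        f = ∑ j, C (b j) * (X j ^ a j * X (κ j)) := by
  choose a κ hmem using hnd.exists_single_add_single_mem_support
  set g : Fin N → Fin N →₀ ℕ := fun i => Finsupp.single i (a i) + Finsupp.single (κ i) 1
  have ha : ∀ i, 2 ≤ a i := fun i =>
    two_le_of_single_add_single hvd (hqh _ (hmem i)) (hno2 _ (hmem i))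
  have hg : Function.Injective g := fun i i' h => eq_of_single_add_single_eq (ha i) (ha i') h
  have hsupp : f.support = Finset.univ.image g := by
    refine (Finset.eq_of_subset_of_card_le (Finset.image_subset_iff.mpr fun i _ => hmem i) ?_).symm
    rwa [Finset.card_image_of_injective _ hg, Finset.card_univ, Fintype.card_fin]
  refine ⟨κ, a, fun i => coeff (g i) f, ha, fun i => mem_support_iff.mp (hmem i), ?_⟩
  simp_rw [C_mul_X_pow_mul_X]
  exact eq_sum_monomial_of_support_eq_image hg hsupp

lemma isInvertiblePoly_loop_form {N : ℕ} {κ : Fin N → Fin N} {a : Fin N → ℕ}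
    {b : Fin N → ℂ} (ha : ∀ j, 2 ≤ a j) (hb : ∀ j, b j ≠ 0) :
    IsInvertiblePoly (∑ j, C (b j) * (X j ^ a j * X (κ j))) := by
  let E : Matrix (Fin N) (Fin N) ℕ :=
    Matrix.of fun i j => (Finsupp.single i (a i) + Finsupp.single (κ i) 1 : Fin N →₀ ℕ) j
  refine ⟨b, E, hb, Finset.sum_congr rfl fun i _ => ?_,
    det_map_natCast_ne_zero_of_sum_row_lt_diag E fun k => by
      simpa only [E, Matrix.of_apply] using sum_erase_single_add_single_lt k (κ k) (ha k)⟩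
  simp only [E, C_mul_X_pow_mul_X, Matrix.of_apply, prod_univ_X_pow_eq_monomial, C_mul_monomial,
    mul_one]

theorem invertible_iff_loop_form_general (N : ℕ) (v : Fin N → ℕ) (d : ℕ)
    (hvd : ∀ i, v i < d)
    (f : MvPolynomial (Fin N) ℂ)
    (hqh : ∀ m ∈ f.support, ∑ i, m i * v i = d)
    (hnd : IsNondegenerate f)
    (hno2 : ∀ m ∈ f.support, (∑ i, m i) ≠ 2) :
    IsInvertiblePoly f ↔
      ∃ (κ : Fin N → Fin N) (a : Fin N → ℕ) (b : Fin N → ℂ),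
        (∀ j, 2 ≤ a j) ∧ (∀ j, b j ≠ 0) ∧
        f = ∑ j, C (b j) * (X j ^ a j * X (κ j)) := by
  refine ⟨fun hf => exists_loop_form_of_card_support_le hvd hqh hnd hno2 hf.card_support_le, ?_⟩
  rintro ⟨κ, a, b, ha, hb, rfl⟩
  exact isInvertiblePoly_loop_form ha hb

/-- A nondegenerate quasihomogeneous polynomial without quadratic monomials is
invertible if and only if it is of the form `Σ_j b_j x_j^{a_j} x_{κ(j)}` with
`a_j ≥ 2` and `b_j ∈ ℂ^*` for some map `κ`. -/
theorem invertible_iff_loop_form (N : ℕ) (hN : 1 ≤ N) (v : Fin N → ℕ) (d : ℕ)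
    (hv : ∀ i, 0 < v i) (hvd : ∀ i, v i < d)
    (f : MvPolynomial (Fin N) ℂ)
    (hqh : ∀ m ∈ f.support, ∑ i, m i * v i = d)
    (hnd : IsNondegenerate f)
    (hno2 : ∀ m ∈ f.support, (∑ i, m i) ≠ 2) :
    IsInvertiblePoly f ↔
      ∃ (κ : Fin N → Fin N) (a : Fin N → ℕ) (b : Fin N → ℂ),
        (∀ j, 2 ≤ a j) ∧ (∀ j, b j ≠ 0) ∧
        f = ∑ j, C (b j) * (X j ^ a j * X (κ j)) :=
  invertible_iff_loop_form_general N v d hvd f hqh hnd hno2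
end

section
/- Let I be a finite set, κ: I → I a map, a_j integers with a_j ≥ 2 for all j ∈ I, and c_j ∈ ℂ^* arbitrary nonzero complex numbers. Then there exist λ_j ∈ ℂ^* (j ∈ I) such that λ_j^{a_j} · λ_{κ(j)} = c_j for every j ∈ I. In particular, for any coefficients b_j ∈ ℂ^*, taking c_j = b_j^{-1}, the diagonal change of variables x_j ↦ λ_j x_j transforms the polynomial Σ_{j∈I} b_j x_j^{a_j} x_{κ(j)} into Σ_{j∈I} x_j^{a_j} x_{κ(j)}. -/
open MvPolynomial

/-- Scaling normalization: for any map `κ : I → I` on a finite set, exponents `a_j ≥ 2`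
and targets `c_j ∈ ℂ^*`, there are `λ_j ∈ ℂ^*` with `λ_j^{a_j} · λ_{κ(j)} = c_j`.
In particular, taking `c_j = b_j⁻¹`, the diagonal change of variables `x_j ↦ λ_j x_j`
transforms `Σ_j b_j x_j^{a_j} x_{κ(j)}` into `Σ_j x_j^{a_j} x_{κ(j)}`. -/
theorem exists_scaling (I : Type) [Fintype I] [DecidableEq I]
    (κ : I → I) (a : I → ℕ) (ha : ∀ j, 2 ≤ a j)
    (c : I → ℂ) (hc : ∀ j, c j ≠ 0) :
    ∃ lam : I → ℂ,
      (∀ j, lam j ≠ 0) ∧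
      (∀ j, lam j ^ a j * lam (κ j) = c j) ∧
      ∀ b : I → ℂ, (∀ j, b j ≠ 0) → (∀ j, c j = (b j)⁻¹) →
        aeval (fun j => C (lam j) * X j : I → MvPolynomial I ℂ)
            (∑ j, C (b j) * (X j ^ a j * X (κ j))) =
          ∑ j : I, X j ^ a j * X (κ j) := by
  -- the matrix of the linear system `a_j μ_j + μ_{κ j} = log c_j`
  set M : Matrix I I ℂ := fun i j =>
    (if j = i then (a i : ℂ) else 0) + (if j = κ i then 1 else 0) with hM
  have hdet : M.det ≠ 0 := by
    apply det_ne_zero_of_sum_row_lt_diag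
    intro k
    have h1 : ∑ j ∈ Finset.univ.erase k, ‖M k j‖ ≤ 1 := by
      have : ∀ j ∈ Finset.univ.erase k, ‖M k j‖ ≤ if j = κ k then 1 else 0 := by
        intro j hj
        have hjk : j ≠ k := Finset.ne_of_mem_erase hj
        simp [hM, hjk]
        split <;> simp
      calc ∑ j ∈ Finset.univ.erase k, ‖M k j‖
          ≤ ∑ j ∈ Finset.univ.erase k, (if j = κ k then 1 else 0) :=
            Finset.sum_le_sum this
        _ ≤ ∑ j : I, (if j = κ k then (1:ℝ) else 0) := by
            apply Finset.sum_le_sum_of_subset_of_nonneg (Finset.erase_subset _ _)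
            intro j _ _; positivity
        _ = 1 := by simp
    have h2 : (2:ℝ) ≤ ‖M k k‖ := by
      by_cases hk : κ k = k
      · have : M k k = (a k : ℂ) + 1 := by simp [hM, hk]
        rw [this]
        have : ((a k : ℂ) + 1) = ((a k + 1 : ℕ) : ℂ) := by push_cast; ring
        rw [this, Complex.norm_natCast]
        exact_mod_cast le_trans (ha k) (Nat.le_succ _)
      · have hk' : ¬ k = κ k := fun h => hk h.symm
        have : M k k = (a k : ℂ) := by simp [hM, hk']
        rw [this, Complex.norm_natCast]
        exact_mod_cast ha k
    linarith
  set d : I → ℂ := fun j => Complex.log (c j) with hd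
  set μ : I → ℂ := M⁻¹.mulVec d with hμ
  have hMμ : M.mulVec μ = d := by
    rw [hμ, Matrix.mulVec_mulVec, Matrix.mul_nonsing_inv _ (isUnit_iff_ne_zero.mpr hdet), Matrix.one_mulVec]
  have key : ∀ j, (a j : ℂ) * μ j + μ (κ j) = d j := by
    intro j
    have := congrFun hMμ j
    rw [Matrix.mulVec, dotProduct] at this
    rw [← this]
    simp only [hM, add_mul]
    rw [Finset.sum_add_distrib]
    congr 1
    · simp
    · simp
  refine ⟨fun j => Complex.exp (μ j), fun j => Complex.exp_ne_zero _, ?_, ?_⟩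
  · intro j
    rw [← Complex.exp_nat_mul, ← Complex.exp_add, key j, hd, Complex.exp_log (hc j)]
  · intro b hb hcb
    have hlam : ∀ j, Complex.exp (μ j) ^ a j * Complex.exp (μ (κ j)) = c j := by
      intro j
      rw [← Complex.exp_nat_mul, ← Complex.exp_add, key j, hd, Complex.exp_log (hc j)]
    simp only [map_sum, map_mul, map_pow, aeval_X, aeval_C, Algebra.algebraMap_self, algebraMap_eq]
    apply Finset.sum_congr rfl
    intro j _
    have h1 : b j * (Complex.exp (μ j) ^ a j * Complex.exp (μ (κ j))) = 1 := by
      rw [hlam j, hcb j]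
      exact mul_inv_cancel₀ (hb j)
    calc C (b j) * ((C (Complex.exp (μ j)) * X j) ^ a j * (C (Complex.exp (μ (κ j))) * X (κ j)))
        = C (b j * (Complex.exp (μ j) ^ a j * Complex.exp (μ (κ j)))) * (X j ^ a j * X (κ j)) := by
          rw [mul_pow, ← C_pow, map_mul, map_mul]; ring
      _ = X j ^ a j * X (κ j) := by rw [h1, map_one, one_mul]
end

section
/- Let κ: I → I be a map, a_j ≥ 2 integers (j ∈ I), and (v_1,…,v_N,d) a weight system compatible with (κ,a); let R_κ = {a_j e_j + e_{κ(j)} : j ∈ I} be the support of f_κ = Σ_{j=1}^N x_j^{a_j} x_{κ(j)}. For each m ∈ I let S_m := κ^{-1}(m) ∖ {m} (the set of vertices from which an arrow of the graph of κ ends in m) and let A^m := {J ⊆ S_m : |J| ≥ 2}. Then the collection A := ⋃_{m ∈ I} A^m is an admissible collection for R_κ. -/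
open MvPolynomial

/-- `J` is a failing set for `R`: `R ∩ ℤ_{≥0}^J = ∅` and for every `K ⊆ I∖J` with
`|K| = |J|` there is `k ∈ K` with `R_k ∩ ℤ_{≥0}^J = ∅`. -/
def IsFailing {N : ℕ} (v : Fin N → ℕ) (d : ℕ) (R : Set (Fin N → ℕ))
    (J : Finset (Fin N)) : Prop :=
  J.Nonempty ∧ R ∩ cubeJ J = ∅ ∧
    ∀ K : Finset (Fin N), K ⊆ Jᶜ → K.card = J.card →
      ∃ k ∈ K, shiftR v d R k ∩ cubeJ J = ∅

/-- A collection `A` of subsets of `I` is admissible for `R` if every member of `A`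
is a failing set for `R` and every failing set for `R` contains some member of `A`. -/
def IsAdmissible {N : ℕ} (v : Fin N → ℕ) (d : ℕ) (R : Set (Fin N → ℕ))
    (A : Set (Finset (Fin N))) : Prop :=
  (∀ J ∈ A, IsFailing v d R J) ∧
    ∀ J : Finset (Fin N), IsFailing v d R J → ∃ J' ∈ A, J' ⊆ J

/-- The support `R_κ = {a_j e_j + e_{κ(j)} | j ∈ I}` of the polynomial
`f_κ = Σ_j x_j^{a_j} x_{κ(j)}`. -/
def loopSupport {N : ℕ} (κ : Fin N → Fin N) (a : Fin N → ℕ) : Set (Fin N → ℕ) :=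
  {α | ∃ j, α = fun i => a j * (if i = j then 1 else 0) + (if i = κ j then 1 else 0)}

/-- For each `m`, let `S_m = κ⁻¹(m) ∖ {m}` and `A^m = {J ⊆ S_m : |J| ≥ 2}`. Then the
collection `A = ⋃_m A^m` is admissible for `R_κ = supp f_κ`. -/
theorem union_Am_admissible (N : ℕ) (hN : 1 ≤ N) (v : Fin N → ℕ) (d : ℕ)
    (hv : ∀ i, 0 < v i) (hvd : ∀ i, v i < d)
    (κ : Fin N → Fin N) (a : Fin N → ℕ) (ha : ∀ j, 2 ≤ a j)
    (hcomp : ∀ j, a j * v j + v (κ j) = d) :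
    IsAdmissible v d (loopSupport κ a)
      {J : Finset (Fin N) |
        ∃ m, J ⊆ Finset.univ.filter (fun j => κ j = m ∧ j ≠ m) ∧ 2 ≤ J.card} := by

  constructor
  · rintro J ⟨m, hJm, hJ2⟩
    have hmem : ∀ j ∈ J, κ j = m ∧ j ≠ m := by
      intro j hj
      have := hJm hj
      simpa using this
    have hmJ : m ∉ J := fun hm => (hmem m hm).2 rfl
    refine ⟨Finset.card_pos.mp (by omega), ?_, ?_⟩
    · ext α
      simp only [Set.mem_inter_iff, Set.mem_empty_iff_false, iff_false, not_and]
      rintro ⟨j, rfl⟩ hcube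
      have hjJ : j ∈ J := by
        by_contra hj
        have h0 : a j * (if j = j then 1 else 0) + (if j = κ j then 1 else 0) = 0 :=
          hcube j hj
        rw [if_pos rfl] at h0
        have := ha j
        split at h0 <;> omega
      have hκ := hmem j hjJ
      apply hmJ
      by_contra hm
      have h0 : a j * (if m = j then 1 else 0) + (if m = κ j then 1 else 0) = 0 :=
        hcube m hm
      rw [if_neg (Ne.symm hκ.2), if_pos hκ.1.symm] at h0
      omega
    · intro K hK hcard
      obtain ⟨k, hkK, hkm⟩ := Finset.exists_mem_ne (s := K) (by omega) m
      refine ⟨k, hkK, ?_⟩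
      ext α
      simp only [Set.mem_inter_iff, Set.mem_empty_iff_false, iff_false, not_and]
      rintro ⟨hlat, j, hR⟩ hcube
      have hkJ : k ∉ J := by simpa using hK hkK
      have hcoord : ∀ i, α i + (if i = k then 1 else 0) =
          a j * (if i = j then 1 else 0) + (if i = κ j then 1 else 0) := by
        intro i
        have := congrFun hR i
        simpa [stdBasisVec, Pi.add_apply] using this
      by_cases hkj : k = j
      · have h1 := hcoord j
        rw [if_pos hkj.symm, if_pos rfl] at h1
        have hαj : α j ≠ 0 := by
          have := ha j
          split at h1 <;> omega
        have hjJ : j ∈ J := by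
          by_contra h
          exact hαj (hcube j h)
        exact hkJ (hkj ▸ hjJ)
      · have hjJ : j ∈ J := by
          by_contra h
          have h0 := hcube j h
          have h1 := hcoord j
          rw [if_neg (fun hh => hkj hh.symm), if_pos rfl, h0] at h1
          have := ha j
          split at h1 <;> omega
        have hκm := hmem j hjJ
        have h2 := hcoord k
        rw [if_pos rfl, if_neg hkj] at h2
        by_cases hkκ : k = κ j
        · exact hkm (hkκ.trans hκm.1)
        · rw [if_neg hkκ] at h2; omega
  · intro J hJ
    by_contra hA
    push_neg at hA
    obtain ⟨hJne, hRempty, hKcond⟩ := hJ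
    have hκJ : ∀ j ∈ J, κ j ∉ J := by
      intro j hj hκj
      have hmem : (fun i => a j * (if i = j then 1 else 0) + (if i = κ j then 1 else 0)) ∈
          loopSupport κ a ∩ cubeJ J := by
        refine ⟨⟨j, rfl⟩, ?_⟩
        intro i hi
        have h1 : i ≠ j := fun h => hi (h ▸ hj)
        have h2 : i ≠ κ j := fun h => hi (h ▸ hκj)
        show a j * (if i = j then 1 else 0) + (if i = κ j then 1 else 0) = 0
        rw [if_neg h1, if_neg h2, mul_zero]
      rw [hRempty] at hmem
      exact hmem
    have hinj : Set.InjOn κ J := by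
      intro j1 h1 j2 h2 heq
      by_contra hne
      rw [Finset.mem_coe] at h1 h2
      apply hA {j1, j2}
      · refine ⟨κ j1, ?_, ?_⟩
        · intro x hx
          simp only [Finset.mem_insert, Finset.mem_singleton] at hx
          simp only [Finset.mem_filter, Finset.mem_univ, true_and]
          rcases hx with rfl | rfl
          · exact ⟨rfl, fun h => hκJ x h1 (h ▸ h1)⟩
          · exact ⟨heq.symm, fun h => hκJ x h2 (heq ▸ h ▸ h2)⟩
        · rw [Finset.card_pair hne]
      · intro x hx
        simp only [Finset.mem_insert, Finset.mem_singleton] at hx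
        rcases hx with rfl | rfl
        · exact h1
        · exact h2
    have hKsub : J.image κ ⊆ Jᶜ := by
      intro k hk
      rw [Finset.mem_compl]
      obtain ⟨j, hj, rfl⟩ := Finset.mem_image.mp hk
      exact hκJ j hj
    have hKcard : (J.image κ).card = J.card := Finset.card_image_of_injOn hinj
    obtain ⟨k, hkK, hkE⟩ := hKcond (J.image κ) hKsub hKcard
    obtain ⟨j, hjJ, rfl⟩ := Finset.mem_image.mp hkK
    have hmem : (fun i => a j * (if i = j then 1 else 0)) ∈
        shiftR v d (loopSupport κ a) (κ j) ∩ cubeJ J := by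
      refine ⟨⟨?_, ⟨j, ?_⟩⟩, ?_⟩
      · show ∑ i, (a j * (if i = j then 1 else 0)) * v i = d - v (κ j)
        have hterm : ∀ i, (a j * (if i = j then 1 else 0)) * v i =
            if i = j then a j * v j else 0 := by
          intro i; split <;> simp_all
        rw [Finset.sum_congr rfl (fun i _ => hterm i), Finset.sum_ite_eq' Finset.univ j]
        have := hcomp j
        simp only [Finset.mem_univ, if_pos]
        omega
      · funext i
        simp [stdBasisVec, Pi.add_apply]
      · intro i hi
        have h1 : i ≠ j := fun h => hi (h ▸ hjJ)
        show a j * (if i = j then 1 else 0) = 0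
        rw [if_neg h1, mul_zero]
    rw [hkE] at hmem
    exact hmem
end

section
/- Let N ≥ 1 and let q_1,…,q_N be rational numbers. Let f ∈ ℂ[x_1,…,x_{N+1}] be a polynomial such that every exponent vector α in the support of f satisfies Σ_{i=1}^N α_i q_i + α_{N+1}/2 = 1, and such that f(−x_1, x_2,…,x_N, −x_{N+1}) = f(x_1,…,x_{N+1}) (equivalently, α_1 + α_{N+1} is even for every α in the support of f). Then there exists a unique polynomial f̂ ∈ ℂ[x_1,…,x_{N+1}] satisfying f̂(x_1^2, x_2, …, x_N, x_{N+1}) = f(x_1, x_2, …, x_N, x_1·x_{N+1}), and every exponent vector β in the support of f̂ satisfies 2q_1·β_1 + Σ_{i=2}^N q_i β_i + (1/2 − q_1)·β_{N+1} = 1. In other words, the lift of f to the first chart of the crepant resolution of ℂ^{N+1}/(ℤ/2ℤ) is quasihomogeneous with reduced weights (2q_1, q_2, …, q_N, 1/2 − q_1). -/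
/-!
A substitution `x_b ↦ x_a x_b` is a monomial map: on exponents it is the additive shear
`m ↦ m + m_b e_a`, so `aeval` of it is `mapDomain` of that shear. The shear `m ↦ m + m_a e_a`
of `x_a ↦ x_a²` is injective, which gives uniqueness of `f̂`. On exponents with `m_a + m_b` even,
the shear `m ↦ m + m_b e_a` factors through it via `m ↦ m[a := (m_a + m_b) / 2]`, which gives `f̂`;
its weights then follow from a computation in the two coordinates `a` and `b`.
-/

open MvPolynomial

namespace MvPolynomial

variable {σ R : Type*} [CommSemiring R]

noncomputable def shear (a b : σ) : (σ →₀ ℕ) →+ (σ →₀ ℕ) :=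
  AddMonoidHom.id _ + (Finsupp.singleAddHom a).comp (Finsupp.applyAddHom b)

lemma shear_apply (a b : σ) (m : σ →₀ ℕ) : shear a b m = m + Finsupp.single a (m b) := rfl

lemma mapDomain_monomial {τ : Type*} (f : (σ →₀ ℕ) → (τ →₀ ℕ)) (m : σ →₀ ℕ) (r : R) :
    AddMonoidAlgebra.mapDomain f (monomial m r) = monomial (f m) r := by
  simp [monomial]

lemma aeval_eq_mapDomain_shear [DecidableEq σ] (a b : σ) (p : MvPolynomial σ R) :
    aeval (fun i => if i = b then X a * X b else X i) p =
      AddMonoidAlgebra.mapDomain (shear a b) p := by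
  change _ = AddMonoidAlgebra.mapDomainAlgHom R R (shear a b) p
  congr 1
  ext i : 1
  rw [aeval_X, AddMonoidAlgebra.mapDomainAlgHom_apply]
  conv_rhs => rw [X]
  rw [mapDomain_monomial, shear_apply]
  split_ifs with h
  · subst h
    rw [X, X, monomial_mul, one_mul, Finsupp.single_eq_same, add_comm]
  · rw [Finsupp.single_eq_of_ne (Ne.symm h), Finsupp.single_zero, add_zero, X]

lemma shear_injective (a b : σ) : Function.Injective (shear a b) := by
  classical
  intro u v h
  have hb : u b = v b := by
    have := DFunLike.congr_fun h b
    simp only [shear_apply, Finsupp.add_apply, Finsupp.single_apply] at this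
    split_ifs at this <;> omega
  simpa [shear_apply, hb] using h

noncomputable def unshear [DecidableEq σ] (a b : σ) (m : σ →₀ ℕ) : σ →₀ ℕ :=
  m.update a ((m a + m b) / 2)

lemma shear_unshear [DecidableEq σ] {a b : σ} {m : σ →₀ ℕ} (hm : Even (m a + m b)) :
    shear a a (unshear a b m) = shear a b m := by
  obtain ⟨t, ht⟩ := hm
  ext i
  rcases eq_or_ne i a with rfl | hi
  · simp only [unshear, shear_apply, Finsupp.coe_update, Function.update_self, Finsupp.coe_add,
      Pi.add_apply, Finsupp.single_eq_same]
    omega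
  · simp [shear_apply, unshear, hi]

lemma support_mapDomain_subset [DecidableEq σ] {τ : Type*} (f : (τ →₀ ℕ) → (σ →₀ ℕ))
    (p : MvPolynomial τ R) :
    MvPolynomial.support (AddMonoidAlgebra.mapDomain f p) ⊆ p.support.image f :=
  Finsupp.mapDomain_support

lemma mapDomain_shear_unshear [DecidableEq σ] {a b : σ} {p : MvPolynomial σ R}
    (hp : ∀ m ∈ p.support, Even (m a + m b)) :
    AddMonoidAlgebra.mapDomain (shear a a) (AddMonoidAlgebra.mapDomain (unshear a b) p) =
      AddMonoidAlgebra.mapDomain (shear a b) p := by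
  apply AddMonoidAlgebra.coeff_injective
  simp only [AddMonoidAlgebra.coeff_mapDomain, ← Finsupp.mapDomain_comp]
  exact Finsupp.mapDomain_congr fun m hm => shear_unshear (hp m hm)

lemma sum_unshear_mul {S : Type*} [CommRing S] [Fintype σ] [DecidableEq σ] {a b : σ}
    (hab : a ≠ b) {m : σ →₀ ℕ} (hm : Even (m a + m b)) (w : σ → S) :
    ∑ i, (unshear a b m i : S) *
        (if i = a then 2 * w a else if i = b then w b - w a else w i) =
      ∑ i, (m i : S) * w i := by
  obtain ⟨t, ht⟩ := hm
  have hhalf : (m a + m b) / 2 = t := by omega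
  have htS : (m a : S) + m b = t + t := by rw [← Nat.cast_add, ht, Nat.cast_add]
  rw [← sub_eq_zero, ← Finset.sum_sub_distrib, Fintype.sum_eq_add a b hab]
  · simp only [unshear, Finsupp.update_apply, if_pos, if_neg hab.symm, hhalf]
    linear_combination (-w a) * htS
  · intro i ⟨hia, hib⟩
    simp [unshear, hia, hib]

end MvPolynomial

/-- Let `f ∈ ℂ[x_1,…,x_{N+1}]` be quasihomogeneous of degree `1` for reduced weights
`(q_1,…,q_N,1/2)` and invariant under `x_1 ↦ -x_1, x_{N+1} ↦ -x_{N+1}` (i.e.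
`α_1 + α_{N+1}` is even on the support). Then there is a unique polynomial `f̂` with
`f̂(x_1^2, x_2, …, x_N, x_{N+1}) = f(x_1, x_2, …, x_N, x_1·x_{N+1})`, and `f̂` is
quasihomogeneous of degree `1` for the reduced weights
`(2q_1, q_2, …, q_N, 1/2 − q_1)`. -/
theorem lift_to_first_chart (N : ℕ) (hN : 1 ≤ N)
    (q : Fin (N + 1) → ℚ) (hqlast : q (Fin.last N) = 1 / 2)
    (f : MvPolynomial (Fin (N + 1)) ℂ)
    (hqh : ∀ m ∈ f.support, ∑ i, (m i : ℚ) * q i = 1)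
    (hsym : ∀ m ∈ f.support, Even (m 0 + m (Fin.last N))) :
    ∃ fhat : MvPolynomial (Fin (N + 1)) ℂ,
      (aeval (fun i => if i = 0 then X 0 ^ 2 else X i :
          Fin (N + 1) → MvPolynomial (Fin (N + 1)) ℂ) fhat =
        aeval (fun i => if i = Fin.last N then X 0 * X (Fin.last N) else X i :
          Fin (N + 1) → MvPolynomial (Fin (N + 1)) ℂ) f) ∧
      (∀ g : MvPolynomial (Fin (N + 1)) ℂ,
        aeval (fun i => if i = 0 then X 0 ^ 2 else X i :
            Fin (N + 1) → MvPolynomial (Fin (N + 1)) ℂ) g =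
          aeval (fun i => if i = Fin.last N then X 0 * X (Fin.last N) else X i :
            Fin (N + 1) → MvPolynomial (Fin (N + 1)) ℂ) f → g = fhat) ∧
      ∀ m ∈ fhat.support,
        ∑ i, (m i : ℚ) *
          (if i = 0 then 2 * q 0 else if i = Fin.last N then 1 / 2 - q 0 else q i) = 1 := by
  have h0last : (0 : Fin (N + 1)) ≠ Fin.last N := by
    rw [ne_eq, Fin.ext_iff, Fin.val_zero, Fin.val_last]
    omega
  simp only [sq, aeval_eq_mapDomain_shear]
  refine ⟨AddMonoidAlgebra.mapDomain (unshear 0 (Fin.last N)) f, mapDomain_shear_unshear hsym,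
    fun g hg => ?_, fun β hβ => ?_⟩
  · exact AddMonoidAlgebra.mapDomain_injective (shear_injective 0 0)
      (hg.trans (mapDomain_shear_unshear hsym).symm)
  · obtain ⟨m, hm, rfl⟩ := Finset.mem_image.1 (support_mapDomain_subset _ f hβ)
    rw [← hqlast, sum_unshear_mul h0last (hsym m hm)]
    exact hqh m hm
end
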